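/- Let H be the digraph on {a,b,c} with edges (a,b),(b,a),(b,b),(b,c) (the digraph H₄: undirected edge ab, self-loop at b, directed edge b→c). Then c is a ∀-canon of H, and for every prenex {∃,∀,∧,∨}-sentence φ: H ⊨ φ if and only if H ⊨ φ[∀/c, ∃/b], where all universal variables are instantiated as c and all existential variables as b. -/

import Mathlib

/-- Quantifier-free positive equality-free formulas over the digraph signature,
with `n` free variables. -/
inductive QF : ℕ → Type
  | atom {n : ℕ} (i j : Fin n) : QF n
  | conj {n : ℕ} (φ ψ : QF n) : QF n
  | disj {n : ℕ} (φ ψ : QF n) : QF n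

/-- Prenex positive equality-free first-order formulas over the digraph signature. -/
inductive PFO : ℕ → Type
  | qf  {n : ℕ} (φ : QF n) : PFO n
  | ex  {n : ℕ} (φ : PFO (n + 1)) : PFO n
  | all {n : ℕ} (φ : PFO (n + 1)) : PFO n

def QF.eval {V : Type*} (E : V → V → Prop) : {n : ℕ} → QF n → (Fin n → V) → Prop
  | _, .atom i j, ρ => E (ρ i) (ρ j)
  | _, .conj φ ψ, ρ => φ.eval E ρ ∧ ψ.eval E ρ
  | _, .disj φ ψ, ρ => φ.eval E ρ ∨ ψ.eval E ρ

/-- Evaluation of a prenex formula, where `u = some x` means every universal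
variable is instantiated as `x` (instead of being genuinely universally
quantified), and `e = some y` means every existential variable is instantiated
as `y`. `none` means genuine quantification. -/
def PFO.eval {V : Type*} (E : V → V → Prop) (u e : Option V) :
    {n : ℕ} → PFO n → (Fin n → V) → Prop
  | _, .qf φ, ρ => φ.eval E ρ
  | _, .ex φ, ρ =>
      match e with
      | none => ∃ v, φ.eval E u e (Fin.snoc ρ v)
      | some y => φ.eval E u e (Fin.snoc ρ y)
  | _, .all φ, ρ =>
      match u with
      | none => ∀ v, φ.eval E u e (Fin.snoc ρ v)
      | some x => φ.eval E u e (Fin.snoc ρ x)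

/-- Satisfaction of a prenex sentence by the digraph `(V, E)`, with optional
instantiation of the universal (`u`) and existential (`e`) variables. -/
def PFO.Sat {V : Type*} (E : V → V → Prop) (u e : Option V) (φ : PFO 0) : Prop :=
  φ.eval E u e (fun i => i.elim0)

/-- The digraph `H₄` on `{a, b, c} = {0, 1, 2}`: edges `(a,b), (b,a), (b,b), (b,c)`. -/
def H4E (x y : Fin 3) : Prop :=
  (x = 0 ∧ y = 1) ∨ (x = 1 ∧ y = 0) ∨ (x = 1 ∧ y = 1) ∨ (x = 1 ∧ y = 2)

/-!
`Dominated E x y` says that `y` has every edge `x` has, so replacing values of variables by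
dominating ones preserves positive quantifier-free formulas. In `H₄` every vertex dominates `c`
(this is the ∀-canon property) and `b` dominates every vertex. Hence a genuine play of the
quantifiers transfers to the instantiated one (`b` dominates any witness, and `c` is itself a
genuine universal choice), and back (`b` is a genuine witness, and any universal choice
dominates `c`).
-/

def Dominated {V : Type*} (E : V → V → Prop) (x y : V) : Prop :=
  ∀ z, (E x z → E y z) ∧ (E z x → E z y)

theorem Dominated.refl {V : Type*} (E : V → V → Prop) (x : V) : Dominated E x x :=
  fun _ => ⟨id, id⟩

theorem Dominated.edge {V : Type*} {E : V → V → Prop} {x x' y y' : V}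
    (hx : Dominated E x x') (hy : Dominated E y y') (h : E x y) : E x' y' :=
  (hy x').2 ((hx y).1 h)

/-- The values a quantifier ranges over: everything if genuine, `{x}` if instantiated as `x`. -/
def quantRange {V : Type*} (o : Option V) : Set V :=
  o.elim Set.univ singleton

section Transfer

variable {V W : Type*} {E : V → V → Prop} {F : W → W → Prop} {R : V → W → Prop}

theorem PFO.eval_ex_iff {u e : Option V} {n : ℕ} (φ : PFO (n + 1)) (ρ : Fin n → V) :
    PFO.eval E u e (.ex φ) ρ ↔ ∃ v ∈ quantRange e, PFO.eval E u e φ (Fin.snoc ρ v) := by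
  cases e <;> simp [PFO.eval, quantRange]

theorem PFO.eval_all_iff {u e : Option V} {n : ℕ} (φ : PFO (n + 1)) (ρ : Fin n → V) :
    PFO.eval E u e (.all φ) ρ ↔ ∀ v ∈ quantRange u, PFO.eval E u e φ (Fin.snoc ρ v) := by
  cases u <;> simp [PFO.eval, quantRange]

theorem Fin.forall_rel_snoc {n : ℕ} {ρ : Fin n → V} {σ : Fin n → W} {v : V} {w : W}
    (hρσ : ∀ i, R (ρ i) (σ i)) (hvw : R v w) :
    ∀ i, R (Fin.snoc (α := fun _ => V) ρ v i) (Fin.snoc (α := fun _ => W) σ w i) :=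
  Fin.lastCases (by simpa using hvw) (fun i => by simpa using hρσ i)

theorem QF.eval_of_rel (hR : ∀ {x y x' y'}, R x x' → R y y' → E x y → F x' y') {n : ℕ}
    (φ : QF n) {ρ : Fin n → V} {σ : Fin n → W} (hρσ : ∀ i, R (ρ i) (σ i)) :
    φ.eval E ρ → φ.eval F σ := by
  induction φ with
  | atom i j => simp only [QF.eval]; exact hR (hρσ i) (hρσ j)
  | conj φ ψ ihφ ihψ => simp only [QF.eval]; exact And.imp ihφ ihψ
  | disj φ ψ ihφ ihψ => simp only [QF.eval]; exact Or.imp ihφ ihψ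

theorem PFO.eval_of_rel (hR : ∀ {x y x' y'}, R x x' → R y y' → E x y → F x' y')
    {u e : Option V} {u' e' : Option W}
    (hex : ∀ v ∈ quantRange e, ∃ w ∈ quantRange e', R v w)
    (hall : ∀ w ∈ quantRange u', ∃ v ∈ quantRange u, R v w) {n : ℕ}
    (φ : PFO n) {ρ : Fin n → V} {σ : Fin n → W} (hρσ : ∀ i, R (ρ i) (σ i)) :
    φ.eval E u e ρ → φ.eval F u' e' σ := by
  induction φ with
  | qf ψ => exact QF.eval_of_rel @hR ψ hρσ
  | ex φ ih =>
    simp only [PFO.eval_ex_iff]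
    rintro ⟨v, hv, hφ⟩
    obtain ⟨w, hw, hvw⟩ := hex v hv
    exact ⟨w, hw, ih (Fin.forall_rel_snoc hρσ hvw) hφ⟩
  | all φ ih =>
    simp only [PFO.eval_all_iff]
    intro hφ w hw
    obtain ⟨v, hv, hvw⟩ := hall w hw
    exact ih (Fin.forall_rel_snoc hρσ hvw) (hφ v hv)

end Transfer

theorem PFO.sat_iff_sat_instantiate {V : Type*} {E : V → V → Prop} {c b : V}
    (hc : ∀ z, Dominated E c z) (hb : ∀ z, Dominated E z b) (φ : PFO 0) :
    PFO.Sat E none none φ ↔ PFO.Sat E (some c) (some b) φ := by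
  have hnil : ∀ i : Fin 0, Dominated E (Fin.elim0 i) (Fin.elim0 i) := fun i => i.elim0
  constructor
  · refine PFO.eval_of_rel (u' := some c) (e' := some b) Dominated.edge
      (fun v _ => ⟨b, rfl, hb v⟩) ?_ φ hnil
    rintro w rfl
    exact ⟨w, trivial, Dominated.refl E w⟩
  · refine PFO.eval_of_rel (u := some c) (e := some b) Dominated.edge ?_
      (fun w _ => ⟨c, rfl, hc w⟩) φ hnil
    rintro v rfl
    exact ⟨v, trivial, Dominated.refl E v⟩

theorem H4E_two_dominated (z : Fin 3) : Dominated H4E 2 z := by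
  intro w; fin_cases z <;> fin_cases w <;> simp [H4E]

theorem H4E_dominated_one (z : Fin 3) : Dominated H4E z 1 := by
  intro w; fin_cases z <;> fin_cases w <;> simp [H4E]

/-- in `H₄`, the vertex `c = 2` is a ∀-canon, and a prenex positive
equality-free sentence holds in `H₄` iff it holds with every universal variable
instantiated as `c = 2` and every existential variable as `b = 1`. -/
theorem stmt11 :
    (∀ v, (H4E 2 v → ∀ z, H4E z v) ∧ (H4E v 2 → ∀ z, H4E v z)) ∧
    ∀ φ : PFO 0, PFO.Sat H4E none none φ ↔ PFO.Sat H4E (some 2) (some 1) φ :=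
  ⟨fun v => ⟨fun h z => (H4E_two_dominated z v).1 h, fun h z => (H4E_two_dominated z v).2 h⟩,
    PFO.sat_iff_sat_instantiate H4E_two_dominated H4E_dominated_one⟩
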